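/- For any permutation w ∈ S_n, the Schubert determinantal ideal I_w is generated by the CDG generators: I_w = ⟨G_w⟩. -/

import Mathlib

open scoped Classical
noncomputable section

/-! ## Partial permutation matrices (1-indexed) -/

/-- A partial permutation: an `rows × cols` 0-1 matrix (1-indexed) with at most one 1
in each row and in each column.  `mat i j` expresses that there is a 1 in cell `(i,j)`. -/
structure PartialPerm where
  rows : ℕ
  cols : ℕ
  mat : ℕ → ℕ → Prop
  mat_support : ∀ i j, mat i j → 1 ≤ i ∧ i ≤ rows ∧ 1 ≤ j ∧ j ≤ cols
  mat_row : ∀ i j j', mat i j → mat i j' → j = j'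
  mat_col : ∀ i i' j, mat i j → mat i' j → i = i'

namespace PartialPerm

/-- The Rothe diagram of a partial permutation. -/
def diagram (w : PartialPerm) : Set (ℕ × ℕ) :=
  {p | 1 ≤ p.1 ∧ p.1 ≤ w.rows ∧ 1 ≤ p.2 ∧ p.2 ≤ w.cols ∧
    (∀ j', j' ≤ p.2 → ¬ w.mat p.1 j') ∧ (∀ i', i' ≤ p.1 → ¬ w.mat i' p.2)}

/-- The rank function: the number of 1's in the top-left `i × j` submatrix. -/
def rank (w : PartialPerm) (i j : ℕ) : ℕ :=
  Set.ncard {p : ℕ × ℕ | p.1 ≤ i ∧ p.2 ≤ j ∧ w.mat p.1 p.2}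

/-- The essential set. -/
def ess (w : PartialPerm) : Set (ℕ × ℕ) :=
  {p | p ∈ w.diagram ∧ (p.1 + 1, p.2) ∉ w.diagram ∧ (p.1, p.2 + 1) ∉ w.diagram}

/-- The dominant part of the Rothe diagram. -/
def domPart (w : PartialPerm) : Set (ℕ × ℕ) :=
  {p | p ∈ w.diagram ∧ w.rank p.1 p.2 = 0}

/-- `Ess'(w) = Ess(w) \ Dom(w)`. -/
def essPrime (w : PartialPerm) : Set (ℕ × ℕ) := w.ess \ w.domPart

/-- The Lehmer code: the number of diagram cells in row `i`. -/
def code (w : PartialPerm) (i : ℕ) : ℕ := Set.ncard {j | (i, j) ∈ w.diagram}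

/-- Transpose of a partial permutation. -/
def transpose (w : PartialPerm) : PartialPerm where
  rows := w.cols
  cols := w.rows
  mat i j := w.mat j i
  mat_support := fun i j h => by
    obtain ⟨h1, h2, h3, h4⟩ := w.mat_support j i h
    exact ⟨h3, h4, h1, h2⟩
  mat_row := fun i j j' h h' => w.mat_col j j' i h h'
  mat_col := fun i i' j h h' => w.mat_row j i i' h h'

/-- `w` is (the matrix of) a permutation in `S_n`. -/
def IsPerm (n : ℕ) (w : PartialPerm) : Prop :=
  w.rows = n ∧ w.cols = n ∧ (∀ i, 1 ≤ i → i ≤ n → ∃ j, w.mat i j) ∧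
    (∀ j, 1 ≤ j → j ≤ n → ∃ i, w.mat i j)

/-- `w'` is the completion of the partial permutation `w` to a permutation in `S_N`:
it extends `w` and has the same Rothe diagram. -/
def IsCompletion (w : PartialPerm) (N : ℕ) (w' : PartialPerm) : Prop :=
  IsPerm N w' ∧ w.rows ≤ N ∧ w.cols ≤ N ∧
    (∀ i j, 1 ≤ i → i ≤ w.rows → 1 ≤ j → j ≤ w.cols → (w.mat i j ↔ w'.mat i j)) ∧
    w'.diagram = w.diagram

end PartialPerm

/-! ## Right multiplication by a transposition -/

/-- The transposition of `a` and `b` as a function on `ℕ`. -/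
def swapNat (a b i : ℕ) : ℕ := if i = a then b else if i = b then a else i

lemma swapNat_invol (a b i : ℕ) : swapNat a b (swapNat a b i) = i := by
  simp only [swapNat]; split_ifs <;> omega

/-- The product `w · t_{ab}` with the transposition `t_{ab}` (so row `i` of the product
is row `swapNat a b i` of `w`). -/
def mulT (w : PartialPerm) (a b : ℕ) : PartialPerm where
  rows := w.rows
  cols := w.cols
  mat i j := 1 ≤ i ∧ i ≤ w.rows ∧ w.mat (swapNat a b i) j
  mat_support := fun i j h =>
    ⟨h.1, h.2.1, (w.mat_support _ _ h.2.2).2.2.1, (w.mat_support _ _ h.2.2).2.2.2⟩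
  mat_row := fun i j j' h h' => w.mat_row _ j j' h.2.2 h'.2.2
  mat_col := fun i i' j h h' => by
    have hs : swapNat a b i = swapNat a b i' := w.mat_col _ _ j h.2.2 h'.2.2
    have := congrArg (swapNat a b) hs
    rwa [swapNat_invol, swapNat_invol] at this

/-- The partial permutation obtained from `w` by deleting the dot at `(i0, j0)`. -/
def removeDot (w : PartialPerm) (i0 j0 : ℕ) : PartialPerm where
  rows := w.rows
  cols := w.cols
  mat i j := w.mat i j ∧ ¬(i = i0 ∧ j = j0)
  mat_support := fun i j h => w.mat_support i j h.1
  mat_row := fun i j j' h h' => w.mat_row i j j' h.1 h'.1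
  mat_col := fun i i' j h h' => w.mat_col i i' j h.1 h'.1

/-! ## Bruhat order, transitions -/

/-- Bruhat order via rank functions: `v ≤ w` iff `r_v ≥ r_w` pointwise. -/
def bruhatLE (v w : PartialPerm) : Prop := ∀ i j, w.rank i j ≤ v.rank i j

def bruhatLT (v w : PartialPerm) : Prop := bruhatLE v w ∧ v ≠ w

/-- Covering relation of Bruhat order on `S_n`. -/
def bruhatCov (n : ℕ) (v w : PartialPerm) : Prop :=
  bruhatLT v w ∧ ∀ u, PartialPerm.IsPerm n u → bruhatLT v u → bruhatLT u w → False

/-- `I(v,r) = {i < r : v ⋖ v t_{ir}}`. -/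
def IsetI (n : ℕ) (v : PartialPerm) (r : ℕ) : Set ℕ :=
  {i | 1 ≤ i ∧ i < r ∧ bruhatCov n v (mulT v i r)}

/-- `Φ(v,r) = {v t_{ir} : i ∈ I(v,r)}`. -/
def PhiSet (n : ℕ) (v : PartialPerm) (r : ℕ) : Set PartialPerm :=
  {u | ∃ i ∈ IsetI n v r, u = mulT v i r}

/-- Lexicographic order on cells. -/
def lexLE (p q : ℕ × ℕ) : Prop := p.1 < q.1 ∨ (p.1 = q.1 ∧ p.2 ≤ q.2)

/-- `(r,s)` is the (lexicographically) maximal corner of `D_w`. -/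
def IsMaxCorner (w : PartialPerm) (r s : ℕ) : Prop :=
  (r, s) ∈ w.diagram ∧ ∀ p ∈ w.diagram, lexLE p (r, s)

/-- `(i,j)` is an inversion of `w`. -/
def IsInversion (w : PartialPerm) (p : ℕ × ℕ) : Prop :=
  p.1 < p.2 ∧ ∃ a b, w.mat p.1 a ∧ w.mat p.2 b ∧ b < a

/-- The dot `(i,j)` of `w` is a pivot with respect to the maximal corner `(r,s)`:
it lies strictly northwest of `(r,s)` and is maximally southeast among such dots. -/
def IsPivot (w : PartialPerm) (r s i j : ℕ) : Prop :=
  w.mat i j ∧ i < r ∧ j < s ∧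
    ∀ i' j', w.mat i' j' → i' < r → j' < s → i ≤ i' → j ≤ j' → i = i' ∧ j = j'

/-- The marching operation `w →^i u` of Knutson and Yong at the pivot in row `i`:
the lines emanating from the pivot dot are removed, and every diagram cell in the
rectangle spanned by the pivot and the maximal corner moves strictly to the northwest,
filling a position vacated either by the removed lines or by another cell. -/
def Marches (w : PartialPerm) (i : ℕ) (u : PartialPerm) : Prop :=
  ∃ r s j0, IsMaxCorner w r s ∧ w.mat i j0 ∧ IsPivot w r s i j0 ∧
    u.rows = w.rows ∧ u.cols = w.cols ∧ PartialPerm.IsPerm w.rows u ∧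
    (let R : Set (ℕ × ℕ) := w.diagram ∩ Set.Icc (i, j0) (r, s);
     ∃ θ : ℕ × ℕ → ℕ × ℕ, Set.InjOn θ R ∧
        (∀ c ∈ R, θ c ≠ c ∧ (θ c).1 ≤ c.1 ∧ (θ c).2 ≤ c.2 ∧
          (θ c ∈ (removeDot w i j0).diagram \ w.diagram ∨ θ c ∈ R)) ∧
        u.diagram = (w.diagram \ R) ∪ θ '' R)

/-! ## Block sums and classes of (partial) permutations -/

/-- `w` is the block sum `u ⊞ v`. -/
def IsBlockSum (u v w : PartialPerm) : Prop :=
  w.rows = v.rows + u.rows ∧ w.cols = u.cols + v.cols ∧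
  w.diagram =
    {p : ℕ × ℕ | 1 ≤ p.1 ∧ p.1 ≤ v.rows ∧ 1 ≤ p.2 ∧ p.2 ≤ u.cols}
    ∪ (fun p : ℕ × ℕ => (p.1, p.2 + u.cols)) '' v.diagram
    ∪ (fun p : ℕ × ℕ => (p.1 + v.rows, p.2)) '' u.diagram

/-- `w` is the iterated block sum `u₁ ⊞ (u₂ ⊞ (⋯ ⊞ u_k))` of a nonempty list. -/
inductive IsBlockSumList : List PartialPerm → PartialPerm → Prop
  | single (u : PartialPerm) : IsBlockSumList [u] u
  | cons (u : PartialPerm) {us : List PartialPerm} {v w : PartialPerm} :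
      IsBlockSumList us v → IsBlockSum u v w → IsBlockSumList (u :: us) w

/-- A partial permutation is predominant if its Lehmer code has the form
`(λ₁, …, λ_k, 0^h, ℓ, 0, 0, …)` for a partition `λ` and `h, ℓ ≥ 0`. -/
def IsPredominant (w : PartialPerm) : Prop :=
  ∃ k h ℓ : ℕ,
    (∀ i i', 1 ≤ i → i ≤ i' → i' ≤ k → w.code i' ≤ w.code i) ∧
    (∀ i, k < i → i < k + h + 1 → w.code i = 0) ∧
    w.code (k + h + 1) = ℓ ∧
    (∀ i, k + h + 1 < i → w.code i = 0)

/-- A partial permutation is copredominant if its transpose is predominant. -/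
def IsCopredominant (w : PartialPerm) : Prop := IsPredominant w.transpose

/-- A partial permutation is vexillary if the rows of its Rothe diagram are totally
ordered by inclusion. -/
def IsVexillary (w : PartialPerm) : Prop :=
  ∀ i i', {j | (i, j) ∈ w.diagram} ⊆ {j | (i', j) ∈ w.diagram} ∨
    {j | (i', j) ∈ w.diagram} ⊆ {j | (i, j) ∈ w.diagram}

/-- A partial permutation is block predominant if it is a block sum of finitely many
predominant partial permutations. -/
def IsBlockPredominant (w : PartialPerm) : Prop :=
  ∃ L : List PartialPerm, (∀ u ∈ L, IsPredominant u) ∧ IsBlockSumList L w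

/-- A permutation `w ∈ S_n` is block predominant. -/
def IsBlockPredominantPerm (n : ℕ) (w : PartialPerm) : Prop :=
  PartialPerm.IsPerm n w ∧
    ∃ (L : List PartialPerm) (b : PartialPerm),
      (∀ u ∈ L, IsPredominant u) ∧ IsBlockSumList L b ∧ PartialPerm.IsCompletion b n w

/-- A permutation `w ∈ S_n` is banner: it is (the completion of) a block sum of
predominant, copredominant and vexillary partial permutations. -/
def IsBanner (n : ℕ) (w : PartialPerm) : Prop :=
  PartialPerm.IsPerm n w ∧
    ∃ (L : List PartialPerm) (b : PartialPerm),
      (∀ u ∈ L, IsPredominant u ∨ IsCopredominant u ∨ IsVexillary u) ∧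
      IsBlockSumList L b ∧ PartialPerm.IsCompletion b n w

/-- A nonempty partial permutation. -/
def NonemptyPP (u : PartialPerm) : Prop := 0 < u.rows ∨ 0 < u.cols

/-- An indecomposable permutation: not (the completion of) a block sum of two nonempty
predominant partial permutations. -/
def IsIndecomposable (n : ℕ) (w : PartialPerm) : Prop :=
  ¬ ∃ u v b, IsPredominant u ∧ IsPredominant v ∧ NonemptyPP u ∧ NonemptyPP v ∧
      IsBlockSum u v b ∧ PartialPerm.IsCompletion b n w

/-! ## The polynomial ring, minors, Schubert determinantal ideals -/

/-- The polynomial ring `ℂ[z_{ij} : i, j ≥ 1]` (all variables `z_{ij}`, `(i,j) : ℕ × ℕ`). -/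
abbrev Rring : Type := MvPolynomial (ℕ × ℕ) ℂ

/-- The variable `z_{ij}`. -/
def zvar (i j : ℕ) : Rring := MvPolynomial.X (i, j)

/-- The generic matrix `Z`. -/
def zmat : ℕ → ℕ → Rring := fun i j => zvar i j

/-- The generic matrix `Z^S` with the variables in positions `S` specialized to `0`. -/
def zmatAvoid (S : Set (ℕ × ℕ)) : ℕ → ℕ → Rring :=
  fun i j => if (i, j) ∈ S then 0 else zvar i j

/-- The set of `k × k` minors of the top-left `i × j` submatrix of the matrix `f`. -/
def minorsIn (f : ℕ → ℕ → Rring) (k i j : ℕ) : Set Rring :=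
  {g | ∃ rs cs : Fin k → ℕ, StrictMono rs ∧ StrictMono cs ∧
    (∀ a, 1 ≤ rs a ∧ rs a ≤ i) ∧ (∀ a, 1 ≤ cs a ∧ cs a ≤ j) ∧
    g = Matrix.det (Matrix.of fun a b : Fin k => f (rs a) (cs b))}

/-- The Schubert determinantal ideal `I_w`. -/
def schubertIdeal (w : PartialPerm) : Ideal Rring :=
  Ideal.span {g | ∃ i j, 1 ≤ i ∧ i ≤ w.rows ∧ 1 ≤ j ∧ j ≤ w.cols ∧
    g ∈ minorsIn zmat (w.rank i j + 1) i j}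

/-- The CDG generators of `I_w`. -/
def cdgGens (w : PartialPerm) : Set Rring :=
  {g | ∃ p ∈ w.domPart, g = zvar p.1 p.2} ∪
  {g | ∃ p ∈ w.essPrime, g ∈ minorsIn (zmatAvoid w.domPart) (w.rank p.1 p.2 + 1) p.1 p.2}

/-! ## Monomial orders, initial ideals, Gröbner bases -/

/-- A monomial order on monomials in variables `σ`. -/
structure MonomialOrd (σ : Type) where
  le : (σ →₀ ℕ) → (σ →₀ ℕ) → Prop
  le_refl : ∀ a, le a a
  le_trans : ∀ a b c, le a b → le b c → le a c
  le_antisymm : ∀ a b, le a b → le b a → a = b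
  le_total : ∀ a b, le a b ∨ le b a
  add_le_add : ∀ a b c, le a b → le (a + c) (b + c)
  zero_le : ∀ a, le 0 a

/-- `t` is the initial term of `f` with respect to the monomial order `ord`. -/
def IsInitTerm {σ : Type} (ord : MonomialOrd σ) (f t : MvPolynomial σ ℂ) : Prop :=
  ∃ m ∈ f.support, (∀ m' ∈ f.support, ord.le m' m) ∧
    t = MvPolynomial.monomial m (MvPolynomial.coeff m f)

/-- The ideal generated by the initial terms of the members of `G`. -/
def initSpan {σ : Type} (ord : MonomialOrd σ) (G : Set (MvPolynomial σ ℂ)) :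
    Ideal (MvPolynomial σ ℂ) :=
  Ideal.span {t | ∃ g ∈ G, IsInitTerm ord g t}

/-- The initial ideal of an ideal. -/
def initialIdeal {σ : Type} (ord : MonomialOrd σ) (I : Ideal (MvPolynomial σ ℂ)) :
    Ideal (MvPolynomial σ ℂ) :=
  initSpan ord (I : Set (MvPolynomial σ ℂ))

/-- `G` is a Gröbner basis of `I` with respect to `ord`. -/
def IsGroebner {σ : Type} (ord : MonomialOrd σ) (G : Set (MvPolynomial σ ℂ))
    (I : Ideal (MvPolynomial σ ℂ)) : Prop :=
  G ⊆ (I : Set (MvPolynomial σ ℂ)) ∧ initSpan ord G = initialIdeal ord I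

/-- A diagonal term order: the initial term of the determinant of any square submatrix
of `Z` is the product of the entries on its main diagonal. -/
def IsDiagonalOrder (ord : MonomialOrd (ℕ × ℕ)) : Prop :=
  ∀ (k : ℕ) (rs cs : Fin k → ℕ), StrictMono rs → StrictMono cs →
    (∀ a, 1 ≤ rs a) → (∀ a, 1 ≤ cs a) →
    IsInitTerm ord (Matrix.det (Matrix.of fun a b : Fin k => zmat (rs a) (cs b)))
      (∏ a, zvar (rs a) (cs a))

/-- `w` is CDG: the CDG generators are a Gröbner basis of `I_w` for every diagonal
term order. -/
def IsCDG (w : PartialPerm) : Prop :=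
  ∀ ord : MonomialOrd (ℕ × ℕ), IsDiagonalOrder ord →
    IsGroebner ord (cdgGens w) (schubertIdeal w)

/-- `J_w`: the monomial ideal generated by the initial terms of the CDG generators. -/
def Jideal (ord : MonomialOrd (ℕ × ℕ)) (w : PartialPerm) : Ideal Rring :=
  initSpan ord (cdgGens w)

/-- The initial terms of the nonzero maximal minors of `Z^S_{[i],[j]}`. -/
def JlamGens (ord : MonomialOrd (ℕ × ℕ)) (S : Set (ℕ × ℕ)) (i j : ℕ) : Set Rring :=
  {t | ∃ g ∈ minorsIn (zmatAvoid S) (min i j) i j, g ≠ 0 ∧ IsInitTerm ord g t}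

/-- `J^λ_{ij}`: the ideal generated by the initial terms of the nonzero maximal minors
of `Z^λ_{[i],[j]}`. -/
def Jlam (ord : MonomialOrd (ℕ × ℕ)) (S : Set (ℕ × ℕ)) (i j : ℕ) : Ideal Rring :=
  Ideal.span (JlamGens ord S i j)

/-- The pullback of a monomial order along the variable shift
`z_{ij} ↦ z_{i+a, j+b}`; this is the order induced on the variables of a block. -/
def MonomialOrd.pullback (ord : MonomialOrd (ℕ × ℕ)) (a b : ℕ) : MonomialOrd (ℕ × ℕ) where
  le m m' := ord.le (Finsupp.mapDomain (fun p : ℕ × ℕ => (p.1 + a, p.2 + b)) m)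
    (Finsupp.mapDomain (fun p : ℕ × ℕ => (p.1 + a, p.2 + b)) m')
  le_refl := fun _ => ord.le_refl _
  le_trans := fun _ _ _ h h' => ord.le_trans _ _ _ h h'
  le_antisymm := fun x y h h' => by
    have hinj : Function.Injective (fun p : ℕ × ℕ => (p.1 + a, p.2 + b)) := by
      intro p q hpq
      simp only [Prod.mk.injEq] at hpq
      exact Prod.ext (by omega) (by omega)
    exact Finsupp.mapDomain_injective hinj (ord.le_antisymm _ _ h h')
  le_total := fun _ _ => ord.le_total _ _
  add_le_add := fun x y c h => by
    simpa only [Finsupp.mapDomain_add] using ord.add_le_add _ _ _ h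
  zero_le := fun x => by
    simpa only [Finsupp.mapDomain_zero] using ord.zero_le _

/-- The substitution `↓_a : z_{ij} ↦ z_{i+a, j}`. -/
def vshiftP (a : ℕ) : Rring → Rring :=
  MvPolynomial.rename (fun p : ℕ × ℕ => (p.1 + a, p.2))

/-- The substitution `→_b : z_{ij} ↦ z_{i, j+b}`. -/
def hshiftP (b : ℕ) : Rring → Rring :=
  MvPolynomial.rename (fun p : ℕ × ℕ => (p.1, p.2 + b))

/-! ## Bumpless pipe dreams -/

/-- The six tiles. -/
inductive Tile
  | blank | cross | horiz | vert | se | nw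
deriving DecidableEq

namespace Tile

/-- The tile has a pipe segment reaching its north edge. -/
def hasN : Tile → Bool | .cross => true | .vert => true | .nw => true | _ => false
/-- The tile has a pipe segment reaching its south edge. -/
def hasS : Tile → Bool | .cross => true | .vert => true | .se => true | _ => false
/-- The tile has a pipe segment reaching its east edge. -/
def hasE : Tile → Bool | .cross => true | .horiz => true | .se => true | _ => false
/-- The tile has a pipe segment reaching its west edge. -/
def hasW : Tile → Bool | .cross => true | .horiz => true | .nw => true | _ => false

end Tile

/-- Directions of travel of a pipe. -/
inductive PDir
  | south | west
deriving DecidableEq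

/-- One step of a pipe traversal in the tiling `T` of the `n × n` grid:
the state `(i, j, d)` means the pipe is traversing tile `(i,j)` moving in direction `d`;
`Sum.inr c` means the pipe has exited through the bottom edge in column `c`. -/
def pipeStep (T : ℕ → ℕ → Tile) (n : ℕ) : ℕ × ℕ × PDir → (ℕ × ℕ × PDir) ⊕ ℕ
  | (i, j, PDir.west) =>
      match T i j with
      | Tile.se => if i = n then Sum.inr j else Sum.inl (i + 1, j, PDir.south)
      | _ => Sum.inl (i, j - 1, PDir.west)
  | (i, j, PDir.south) =>
      match T i j with
      | Tile.nw => Sum.inl (i, j - 1, PDir.west)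
      | _ => if i = n then Sum.inr j else Sum.inl (i + 1, j, PDir.south)

/-- The state of the pipe entering at the right edge of row `i` after `k` steps. -/
def pipeState (T : ℕ → ℕ → Tile) (n i k : ℕ) : (ℕ × ℕ × PDir) ⊕ ℕ :=
  (Sum.elim (pipeStep T n) Sum.inr)^[k] (Sum.inl (i, n, PDir.west))

/-- The pipe entering at the right edge of row `i` visits the cell `p`. -/
def pipeVisits (T : ℕ → ℕ → Tile) (n i : ℕ) (p : ℕ × ℕ) : Prop :=
  ∃ k d, pipeState T n i k = Sum.inl (p.1, p.2, d)

/-- A bumpless pipe dream on the `n × n` grid (1-indexed): a tiling by the six tiles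
such that pipes enter at the right edge, exit at the bottom edge, and pairwise cross
at most once. -/
structure BPD (n : ℕ) where
  T : ℕ → ℕ → Tile
  outside : ∀ i j, (i = 0 ∨ j = 0 ∨ n < i ∨ n < j) → T i j = Tile.blank
  matchH : ∀ i j, 1 ≤ i → i ≤ n → 1 ≤ j → j < n → (T i j).hasE = (T i (j + 1)).hasW
  matchV : ∀ i j, 1 ≤ i → i < n → 1 ≤ j → j ≤ n → (T i j).hasS = (T (i + 1) j).hasN
  leftB : ∀ i, 1 ≤ i → i ≤ n → (T i 1).hasW = false
  topB : ∀ j, 1 ≤ j → j ≤ n → (T 1 j).hasN = false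
  rightB : ∀ i, 1 ≤ i → i ≤ n → (T i n).hasE = true
  botB : ∀ j, 1 ≤ j → j ≤ n → (T n j).hasS = true
  exits : ∀ i, 1 ≤ i → i ≤ n → ∃ k c, pipeState T n i k = Sum.inr c
  reduced : ∀ i i', 1 ≤ i → i < i' → i' ≤ n →
    {p : ℕ × ℕ | pipeVisits T n i p ∧ pipeVisits T n i' p ∧
      T p.1 p.2 = Tile.cross}.Subsingleton

/-- The diagram of a bumpless pipe dream: its blank tiles. -/
def BPD.diag {n : ℕ} (P : BPD n) : Set (ℕ × ℕ) :=
  {p | 1 ≤ p.1 ∧ p.1 ≤ n ∧ 1 ≤ p.2 ∧ p.2 ≤ n ∧ P.T p.1 p.2 = Tile.blank}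

/-- `BPD(w)`: the bumpless pipe dreams whose pipe entering in row `i` exits in the
column of the 1 of `w` in row `i`. -/
def bpdSet (n : ℕ) (w : PartialPerm) : Set (BPD n) :=
  {P | ∀ i, 1 ≤ i → i ≤ n → ∃ k j, pipeState P.T n i k = Sum.inr j ∧ w.mat i j}

/-- The ideal `L_P = ⟨z_{ij} : (i,j) ∈ D(P)⟩`. -/
def linIdeal {n : ℕ} (P : BPD n) : Ideal Rring :=
  Ideal.span {g | ∃ p ∈ P.diag, g = zvar p.1 p.2}

/-- Restriction of a tiling to the first `m` rows and `n` columns. -/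
def restrictT (T : ℕ → ℕ → Tile) (m n : ℕ) : ℕ → ℕ → Tile :=
  fun i j => if 1 ≤ i ∧ i ≤ m ∧ 1 ≤ j ∧ j ≤ n then T i j else Tile.blank

/-- `BPD(w)` for a partial permutation `w`: the restrictions to the first
`w.rows` rows and `w.cols` columns of bumpless pipe dreams of the completion of `w`. -/
def bpdPSet (w : PartialPerm) : Set (ℕ → ℕ → Tile) :=
  {Q | ∃ (N : ℕ) (w' : PartialPerm) (P : BPD N),
    PartialPerm.IsCompletion w N w' ∧ P ∈ bpdSet N w' ∧ Q = restrictT P.T w.rows w.cols}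

/-- The diagram of a restricted tiling on an `m × n` grid. -/
def pdiag (m n : ℕ) (Q : ℕ → ℕ → Tile) : Set (ℕ × ℕ) :=
  {p | 1 ≤ p.1 ∧ p.1 ≤ m ∧ 1 ≤ p.2 ∧ p.2 ≤ n ∧ Q p.1 p.2 = Tile.blank}

/-- `L_P` for a restricted tiling. -/
def plinIdeal (w : PartialPerm) (Q : ℕ → ℕ → Tile) : Ideal Rring :=
  Ideal.span {g | ∃ p ∈ pdiag w.rows w.cols Q, g = zvar p.1 p.2}

/-! ## Double Schubert polynomials via bumpless pipe dreams -/

/-- The weight of a bumpless pipe dream: `∏_{(i,j) ∈ D(P)} (x_i - y_j)`, in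
`ℤ[x, y]` where `x_i` is `X (Sum.inl i)` and `y_j` is `X (Sum.inr j)`. -/
def wtBPD {n : ℕ} (P : BPD n) : MvPolynomial (ℕ ⊕ ℕ) ℤ :=
  ∏ p ∈ (Finset.Icc 1 n ×ˢ Finset.Icc 1 n).filter (fun p => P.T p.1 p.2 = Tile.blank),
    (MvPolynomial.X (Sum.inl p.1) - MvPolynomial.X (Sum.inr p.2))

/-- The double Schubert polynomial, defined via bumpless pipe dreams. -/
def schubPoly (n : ℕ) (w : PartialPerm) : MvPolynomial (ℕ ⊕ ℕ) ℤ :=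
  ∑ᶠ P ∈ bpdSet n w, wtBPD P

end

/-! ## Auxiliary lemmas for the proof of `cdg_generates` -/

section CdgAux

open PartialPerm

/-- The set counted by the rank function. -/
def rset (w : PartialPerm) (i j : ℕ) : Set (ℕ × ℕ) :=
  {p | p.1 ≤ i ∧ p.2 ≤ j ∧ w.mat p.1 p.2}

lemma rank_def' (w : PartialPerm) (i j : ℕ) : w.rank i j = (rset w i j).ncard := rfl

lemma rset_finite (w : PartialPerm) (i j : ℕ) : (rset w i j).Finite := by
  apply Set.Finite.subset ((Set.finite_Icc 1 i).prod (Set.finite_Icc 1 j))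
  rintro ⟨a, b⟩ ⟨ha, hb, hm⟩
  obtain ⟨h1, h2, h3, h4⟩ := w.mat_support a b hm
  exact ⟨⟨h1, ha⟩, ⟨h3, hb⟩⟩

lemma rank_succ_row_eq (w : PartialPerm) {i j : ℕ} (h : ∀ c, c ≤ j → ¬ w.mat (i + 1) c) :
    w.rank (i + 1) j = w.rank i j := by
  rw [rank_def', rank_def']
  congr 1
  ext ⟨a, b⟩
  simp only [rset, Set.mem_setOf_eq]
  constructor
  · rintro ⟨ha, hb, hm⟩
    refine ⟨?_, hb, hm⟩
    rcases Nat.lt_or_ge a (i + 1) with h1 | h1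
    · omega
    · have h2 : a = i + 1 := by omega
      exact absurd (h2 ▸ hm) (h b hb)
  · rintro ⟨ha, hb, hm⟩
    exact ⟨by omega, hb, hm⟩

lemma rank_succ_col_eq (w : PartialPerm) {i j : ℕ} (h : ∀ r, r ≤ i → ¬ w.mat r (j + 1)) :
    w.rank i (j + 1) = w.rank i j := by
  rw [rank_def', rank_def']
  congr 1
  ext ⟨a, b⟩
  simp only [rset, Set.mem_setOf_eq]
  constructor
  · rintro ⟨ha, hb, hm⟩
    refine ⟨ha, ?_, hm⟩
    rcases Nat.lt_or_ge b (j + 1) with h1 | h1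
    · omega
    · have h2 : b = j + 1 := by omega
      exact absurd (h2 ▸ hm) (h a ha)
  · rintro ⟨ha, hb, hm⟩
    exact ⟨ha, by omega, hm⟩

lemma rank_succ_row_dot (w : PartialPerm) {i j c : ℕ} (hc : c ≤ j) (hm : w.mat (i + 1) c) :
    w.rank (i + 1) j = w.rank i j + 1 := by
  have hset : rset w (i + 1) j = insert ((i + 1, c) : ℕ × ℕ) (rset w i j) := by
    ext ⟨a, b⟩
    simp only [rset, Set.mem_setOf_eq, Set.mem_insert_iff, Prod.mk.injEq]
    constructor
    · rintro ⟨ha, hb, hmm⟩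
      rcases Nat.lt_or_ge a (i + 1) with h1 | h1
      · exact Or.inr ⟨by omega, hb, hmm⟩
      · have h2 : a = i + 1 := by omega
        subst h2
        exact Or.inl ⟨rfl, w.mat_row _ _ _ hmm hm⟩
    · rintro (⟨h1, h2⟩ | ⟨h1, h2, h3⟩)
      · subst h1; subst h2; exact ⟨le_refl _, hc, hm⟩
      · exact ⟨by omega, h2, h3⟩
  rw [rank_def', rank_def', hset,
    Set.ncard_insert_of_notMem (by rintro ⟨h1, -, -⟩; omega) (rset_finite w i j)]

lemma rank_succ_col_dot (w : PartialPerm) {i j c : ℕ} (hc : c ≤ i) (hm : w.mat c (j + 1)) :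
    w.rank i (j + 1) = w.rank i j + 1 := by
  have hset : rset w i (j + 1) = insert ((c, j + 1) : ℕ × ℕ) (rset w i j) := by
    ext ⟨a, b⟩
    simp only [rset, Set.mem_setOf_eq, Set.mem_insert_iff, Prod.mk.injEq]
    constructor
    · rintro ⟨ha, hb, hmm⟩
      rcases Nat.lt_or_ge b (j + 1) with h1 | h1
      · exact Or.inr ⟨ha, by omega, hmm⟩
      · have h2 : b = j + 1 := by omega
        subst h2
        exact Or.inl ⟨w.mat_col _ _ _ hmm hm, rfl⟩
    · rintro (⟨h1, h2⟩ | ⟨h1, h2, h3⟩)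
      · subst h1; subst h2; exact ⟨hc, le_refl _, hm⟩
      · exact ⟨h1, by omega, h3⟩
  rw [rank_def', rank_def', hset,
    Set.ncard_insert_of_notMem (by rintro ⟨-, h2, -⟩; omega) (rset_finite w i j)]

lemma minorsIn_mono (f : ℕ → ℕ → Rring) (k : ℕ) {i j i' j' : ℕ} (hi : i ≤ i') (hj : j ≤ j') :
    minorsIn f k i j ⊆ minorsIn f k i' j' := by
  rintro g ⟨rs, cs, h1, h2, h3, h4, h5⟩
  exact ⟨rs, cs, h1, h2, fun a => ⟨(h3 a).1, le_trans (h3 a).2 hi⟩,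
    fun a => ⟨(h4 a).1, le_trans (h4 a).2 hj⟩, h5⟩

lemma minorsIn_flip_subset (f : ℕ → ℕ → Rring) (k i j : ℕ) :
    minorsIn (fun x y => f y x) k j i ⊆ minorsIn f k i j := by
  rintro g ⟨rs, cs, h1, h2, h3, h4, h5⟩
  refine ⟨cs, rs, h2, h1, h4, h3, ?_⟩
  rw [h5, ← Matrix.det_transpose]
  congr 1

lemma minor_expand_row (f : ℕ → ℕ → Rring) (k i j : ℕ) {g : Rring}
    (hg : g ∈ minorsIn f (k + 1) (i + 1) j) :
    g ∈ Ideal.span (minorsIn f k i j) := by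
  obtain ⟨rs, cs, hrs, hcs, hrb, hcb, rfl⟩ := hg
  rw [Matrix.det_succ_row _ (Fin.last k)]
  apply Ideal.sum_mem
  intro b _
  apply Ideal.mul_mem_left
  apply Ideal.subset_span
  refine ⟨rs ∘ (Fin.last k).succAbove, cs ∘ b.succAbove,
    hrs.comp (Fin.strictMono_succAbove _), hcs.comp (Fin.strictMono_succAbove _), ?_, ?_, ?_⟩
  · intro a
    refine ⟨(hrb _).1, ?_⟩
    simp only [Function.comp_apply]
    have h1 : (Fin.last k).succAbove a < Fin.last k := by
      rw [Fin.succAbove_last]; exact Fin.castSucc_lt_last a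
    have h2 := hrs h1
    have h3 := (hrb (Fin.last k)).2
    omega
  · intro a; exact hcb _
  · congr 1

lemma minor_expand_col (f : ℕ → ℕ → Rring) (k i j : ℕ) {g : Rring}
    (hg : g ∈ minorsIn f (k + 1) i (j + 1)) :
    g ∈ Ideal.span (minorsIn f k i j) := by
  have h1 : g ∈ minorsIn (fun x y => f y x) (k + 1) (j + 1) i :=
    minorsIn_flip_subset (fun x y => f y x) (k + 1) (j + 1) i hg
  have h2 := minor_expand_row (fun x y => f y x) k j i h1
  exact Ideal.span_mono (minorsIn_flip_subset f k i j) h2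

lemma det_sub_det_mem (I : Ideal Rring) {k : ℕ} (A B : Matrix (Fin k) (Fin k) Rring)
    (h : ∀ a b, A a b - B a b ∈ I) : A.det - B.det ∈ I := by
  rw [← Ideal.Quotient.eq, RingHom.map_det, RingHom.map_det]
  congr 1
  ext a b
  exact Ideal.Quotient.eq.mpr (h a b)

lemma zmat_sub_avoid_mem {S : Set (ℕ × ℕ)} {I : Ideal Rring}
    (hS : ∀ p ∈ S, zvar p.1 p.2 ∈ I) (x y : ℕ) :
    zmat x y - zmatAvoid S x y ∈ I := by
  by_cases hxy : (x, y) ∈ S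
  · simp only [zmatAvoid, if_pos hxy, sub_zero]
    exact hS (x, y) hxy
  · simp only [zmatAvoid, if_neg hxy, zmat, sub_self]
    exact Submodule.zero_mem I

lemma minor_pair {S : Set (ℕ × ℕ)} {I : Ideal Rring}
    (hS : ∀ p ∈ S, zvar p.1 p.2 ∈ I) {k : ℕ} (rs cs : Fin k → ℕ) :
    Matrix.det (Matrix.of fun a b : Fin k => zmat (rs a) (cs b))
      - Matrix.det (Matrix.of fun a b : Fin k => zmatAvoid S (rs a) (cs b)) ∈ I :=
  det_sub_det_mem I _ _ (fun a b => zmat_sub_avoid_mem hS _ _)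

lemma domvar_mem_cdg {w : PartialPerm} {p : ℕ × ℕ} (hp : p ∈ w.domPart) :
    zvar p.1 p.2 ∈ Ideal.span (cdgGens w) :=
  Ideal.subset_span (Set.mem_union_left _ ⟨p, hp, rfl⟩)

lemma domvar_mem_schubert {w : PartialPerm} {p : ℕ × ℕ} (hp : p ∈ w.domPart) :
    zvar p.1 p.2 ∈ schubertIdeal w := by
  obtain ⟨⟨h1, h2, h3, h4, -, -⟩, hr⟩ := hp
  apply Ideal.subset_span
  refine ⟨p.1, p.2, h1, h2, h3, h4, ?_⟩
  rw [hr]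
  refine ⟨fun _ => p.1, fun _ => p.2, ?_, ?_, fun a => ⟨h1, le_rfl⟩, fun a => ⟨h3, le_rfl⟩, ?_⟩
  · intro a b hab
    have ha := a.2; have hb := b.2
    rw [Fin.lt_def] at hab; omega
  · intro a b hab
    have ha := a.2; have hb := b.2
    rw [Fin.lt_def] at hab; omega
  · rw [Matrix.det_fin_one, Matrix.of_apply]
    rfl

end CdgAux
section CdgCore

open PartialPerm

lemma ess_case {w : PartialPerm} {i j : ℕ} (he : ((i, j) : ℕ × ℕ) ∈ w.ess) :
    minorsIn zmat (w.rank i j + 1) i j ⊆ (Ideal.span (cdgGens w) : Set Rring) := by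
  obtain ⟨hd, hne1, hne2⟩ := he
  obtain ⟨hb1, hb2, hb3, hb4, hrow, hcol⟩ := hd
  intro g hg
  by_cases h0 : w.rank i j = 0
  · -- dominant essential cell: 1×1 minors are dominant variables
    have hempty : rset w i j = ∅ := by
      have := (Set.ncard_eq_zero (rset_finite w i j)).mp h0
      exact this
    rw [h0] at hg
    obtain ⟨rs, cs, -, -, hrb, hcb, rfl⟩ := hg
    rw [Matrix.det_fin_one, Matrix.of_apply]
    have hdom : ((rs 0, cs 0) : ℕ × ℕ) ∈ w.domPart := by
      have hnotin : ∀ a b : ℕ, a ≤ i → b ≤ j → ¬ w.mat a b := by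
        intro a b ha hb hm
        have : ((a, b) : ℕ × ℕ) ∈ rset w i j := ⟨ha, hb, hm⟩
        rw [hempty] at this
        exact this
      refine ⟨⟨(hrb 0).1, le_trans (hrb 0).2 hb2, (hcb 0).1, le_trans (hcb 0).2 hb4,
        ?_, ?_⟩, ?_⟩
      · intro j' hj' hm
        exact hnotin _ _ (hrb 0).2 (le_trans hj' (hcb 0).2) hm
      · intro i' hi' hm
        exact hnotin _ _ (le_trans hi' (hrb 0).2) (hcb 0).2 hm
      · rw [rank_def', Set.ncard_eq_zero (rset_finite w _ _)]
        ext ⟨a, b⟩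
        simp only [rset, Set.mem_setOf_eq, Set.mem_empty_iff_false, iff_false, not_and]
        intro ha hb hm
        exact hnotin a b (le_trans ha (hrb 0).2) (le_trans hb (hcb 0).2) hm
    exact domvar_mem_cdg (p := (rs 0, cs 0)) hdom
  · -- non-dominant essential cell
    have hep : ((i, j) : ℕ × ℕ) ∈ w.essPrime :=
      ⟨⟨⟨hb1, hb2, hb3, hb4, hrow, hcol⟩, hne1, hne2⟩, fun hc => h0 hc.2⟩
    obtain ⟨rs, cs, h1, h2, h3, h4, rfl⟩ := hg
    have hg' : Matrix.det (Matrix.of fun a b => zmatAvoid w.domPart (rs a) (cs b))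
        ∈ Ideal.span (cdgGens w) := by
      apply Ideal.subset_span
      exact Set.mem_union_right _ ⟨(i, j), hep, rs, cs, h1, h2, h3, h4, rfl⟩
    have hdiff := minor_pair (S := w.domPart) (I := Ideal.span (cdgGens w))
      (fun p hp => domvar_mem_cdg hp) rs cs
    have := Ideal.add_mem _ hdiff hg'
    simpa using this

lemma diagram_case (w : PartialPerm) :
    ∀ m i j, ((i, j) : ℕ × ℕ) ∈ w.diagram → w.rows + w.cols ≤ i + j + m →
      minorsIn zmat (w.rank i j + 1) i j ⊆ (Ideal.span (cdgGens w) : Set Rring) := by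
  intro m
  induction m with
  | zero =>
    intro i j hd hm
    obtain ⟨h1, h2, h3, h4, h5, h6⟩ := hd
    apply ess_case
    refine ⟨⟨h1, h2, h3, h4, h5, h6⟩, ?_, ?_⟩
    · rintro ⟨-, hb, -⟩; omega
    · rintro ⟨-, -, -, hb, -⟩; omega
  | succ m ih =>
    intro i j hd hm
    by_cases he : ((i, j) : ℕ × ℕ) ∈ w.ess
    · exact ess_case he
    · have hnb : ((i + 1, j) : ℕ × ℕ) ∈ w.diagram ∨ ((i, j + 1) : ℕ × ℕ) ∈ w.diagram := by
        by_contra hc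
        push_neg at hc
        exact he ⟨hd, hc.1, hc.2⟩
      rcases hnb with hnb | hnb
      · have hrk : w.rank (i + 1) j = w.rank i j := rank_succ_row_eq w hnb.2.2.2.2.1
        refine subset_trans (minorsIn_mono _ _ (Nat.le_succ i) le_rfl) ?_
        rw [← hrk]
        exact ih (i + 1) j hnb (by omega)
      · have hrk : w.rank i (j + 1) = w.rank i j := rank_succ_col_eq w hnb.2.2.2.2.2
        refine subset_trans (minorsIn_mono _ _ le_rfl (Nat.le_succ j)) ?_
        rw [← hrk]
        exact ih i (j + 1) hnb (by omega)

lemma cell_case (w : PartialPerm) :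
    ∀ m i j, 1 ≤ i → i ≤ w.rows → 1 ≤ j → j ≤ w.cols → i + j ≤ m →
      minorsIn zmat (w.rank i j + 1) i j ⊆ (Ideal.span (cdgGens w) : Set Rring) := by
  intro m
  induction m with
  | zero => intro i j h1 _ _ _ hm; omega
  | succ m ih =>
    intro i j h1 h2 h3 h4 hm
    by_cases hd : ((i, j) : ℕ × ℕ) ∈ w.diagram
    · exact diagram_case w (w.rows + w.cols) i j hd (by omega)
    · have hdot : (∃ c, c ≤ j ∧ w.mat i c) ∨ (∃ r, r ≤ i ∧ w.mat r j) := by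
        by_contra hc
        push_neg at hc
        exact hd ⟨h1, h2, h3, h4, fun c hcj => hc.1 c hcj, fun r hri => hc.2 r hri⟩
      rcases hdot with ⟨c, hcj, hmc⟩ | ⟨r, hri, hmr⟩
      · obtain ⟨i', rfl⟩ : ∃ i', i = i' + 1 := ⟨i - 1, by omega⟩
        have hrk := rank_succ_row_dot w hcj hmc
        by_cases hi0 : i' = 0
        · subst hi0
          intro g hg
          obtain ⟨rs, cs, hrs, -, hrb, -, -⟩ := hg
          exfalso
          have hr1 : 1 ≤ w.rank (0 + 1) j := by omega
          have hlt : rs ⟨0, by omega⟩ < rs ⟨1, by omega⟩ := by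
            exact hrs (Fin.mk_lt_mk.mpr Nat.zero_lt_one)
          have b0 := hrb ⟨0, by omega⟩
          have b1 := hrb ⟨1, by omega⟩
          omega
        · intro g hg
          rw [hrk] at hg
          have hstep := minor_expand_row zmat (w.rank i' j + 1) i' j hg
          have hsub : Ideal.span (minorsIn zmat (w.rank i' j + 1) i' j)
              ≤ Ideal.span (cdgGens w) :=
            Ideal.span_le.mpr (ih i' j (by omega) (by omega) h3 h4 (by omega))
          exact hsub hstep
      · obtain ⟨j', rfl⟩ : ∃ j', j = j' + 1 := ⟨j - 1, by omega⟩
        have hrk := rank_succ_col_dot w hri hmr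
        by_cases hj0 : j' = 0
        · subst hj0
          intro g hg
          obtain ⟨rs, cs, -, hcs, -, hcb, -⟩ := hg
          exfalso
          have hr1 : 1 ≤ w.rank i (0 + 1) := by omega
          have hlt : cs ⟨0, by omega⟩ < cs ⟨1, by omega⟩ := by
            exact hcs (Fin.mk_lt_mk.mpr Nat.zero_lt_one)
          have b0 := hcb ⟨0, by omega⟩
          have b1 := hcb ⟨1, by omega⟩
          omega
        · intro g hg
          rw [hrk] at hg
          have hstep := minor_expand_col zmat (w.rank i (j' + 1 - 1) + 1) i j' hg
          have hsub : Ideal.span (minorsIn zmat (w.rank i j' + 1) i j')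
              ≤ Ideal.span (cdgGens w) :=
            Ideal.span_le.mpr (ih i j' (by omega) h2 (by omega) (by omega) (by omega))
          exact hsub hstep

end CdgCore
/-- the CDG generators generate the Schubert determinantal ideal. -/
theorem cdg_generates (n : ℕ) (w : PartialPerm) (hw : PartialPerm.IsPerm n w) :
    schubertIdeal w = Ideal.span (cdgGens w) := by
  apply le_antisymm
  · refine Ideal.span_le.mpr ?_
    rintro g ⟨i, j, hi1, hi2, hj1, hj2, hg⟩
    exact cell_case w (i + j) i j hi1 hi2 hj1 hj2 le_rfl hg
  · refine Ideal.span_le.mpr ?_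
    rintro g (⟨p, hp, rfl⟩ | ⟨p, hp, hg⟩)
    · exact domvar_mem_schubert hp
    · obtain ⟨rs, cs, h1, h2, h3, h4, rfl⟩ := hg
      have hgen : Matrix.det (Matrix.of fun a b => zmat (rs a) (cs b)) ∈ schubertIdeal w := by
        apply Ideal.subset_span
        obtain ⟨⟨⟨d1, d2, d3, d4, -, -⟩, -, -⟩, -⟩ := hp
        exact ⟨p.1, p.2, d1, d2, d3, d4, rs, cs, h1, h2, h3, h4, rfl⟩
      have hdiff := minor_pair (S := w.domPart) (I := schubertIdeal w)
        (fun q hq => domvar_mem_schubert hq) rs cs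
      have := Ideal.sub_mem _ hgen hdiff
      simpa using this
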